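/- arXiv:2303.17037 — 8 statements merged into one kernel-verified Lean document; each statement's English description precedes it below -/
import Mathlib

section
/- Let α be a complex number and let v₁, v₂, v₃ be nonzero complex numbers. Define b₁ := -(e^{iπα}·v₂ + e^{-iπα}·v₃)/v₁, b₂ := -(v₁ + v₃)/(e^{iπα}·v₂), and b₃ := -(v₂ + v₁)/(e^{-iπα}·v₃). Then b₁ + b₂ + b₃ - b₁·b₂·b₃ = 2·cos(πα). -/
open Complex

theorem stokes_sum_sub_prod_eq {K : Type*} [Field K] {q v₁ v₂ v₃ : K}
    (hq : q ≠ 0) (hv₁ : v₁ ≠ 0) (hv₂ : v₂ ≠ 0) (hv₃ : v₃ ≠ 0) :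
    let b₁ := -(q * v₂ + q⁻¹ * v₃) / v₁
    let b₂ := -(v₁ + v₃) / (q * v₂)
    let b₃ := -(v₂ + v₁) / (q⁻¹ * v₃)
    b₁ + b₂ + b₃ - b₁ * b₂ * b₃ = q + q⁻¹ := by
  dsimp only
  field_simp
  ring

theorem two_cos_eq_exp_add_inv (z : ℂ) : 2 * cos z = exp (I * z) + (exp (I * z))⁻¹ := by
  rw [two_cos, ← exp_neg, mul_comm I, neg_mul]

/-- Stokes parameters built from nonzero boundary values `v₁, v₂, v₃` always
satisfy the Painlevé II Stokes constraint `b₁ + b₂ + b₃ - b₁b₂b₃ = 2cos(πα)`. -/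
theorem stokes_constraint (α v₁ v₂ v₃ : ℂ)
    (hv₁ : v₁ ≠ 0) (hv₂ : v₂ ≠ 0) (hv₃ : v₃ ≠ 0)
    (b₁ b₂ b₃ : ℂ)
    (hb₁ : b₁ = -(Complex.exp (Complex.I * Real.pi * α) * v₂ +
        Complex.exp (-(Complex.I * Real.pi * α)) * v₃) / v₁)
    (hb₂ : b₂ = -(v₁ + v₃) / (Complex.exp (Complex.I * Real.pi * α) * v₂))
    (hb₃ : b₃ = -(v₂ + v₁) / (Complex.exp (-(Complex.I * Real.pi * α)) * v₃)) :
    b₁ + b₂ + b₃ - b₁ * b₂ * b₃ = 2 * Complex.cos (Real.pi * α) := by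
  rw [exp_neg] at hb₁ hb₃
  rw [two_cos_eq_exp_add_inv, ← mul_assoc, hb₁, hb₂, hb₃]
  exact stokes_sum_sub_prod_eq (exp_ne_zero _) hv₁ hv₂ hv₃
end

section
/- Let α be a complex number and let b₁, b₂, b₃ be complex numbers satisfying the constraint b₁ + b₂ + b₃ - b₁·b₂·b₃ = e^{iπα} + e^{-iπα}. If bᵢ ≠ e^{iπα} for every i ∈ {1,2,3}, then bᵢ ≠ e^{-iπα} for every i ∈ {1,2,3}, and moreover bᵢ·bⱼ ≠ 1 for every pair i ≠ j. -/
/-!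
Write `x = e^{iπα}` and `y = e^{-iπα}`, so that `x * y = 1`. If `b₁ = y`, the constraint
multiplied by `-x` factors as `(b₂ - x) * (b₃ - x) = 0`, forcing another parameter to equal `x`.
If `b₁ * b₂ = 1`, the constraint collapses to `b₁ + b₂ = x + y`; with `b₁ * b₂ = x * y` this
makes `b₁` a root of `(t - x) * (t - y)`, excluded by the first part.
-/

open Complex

section StokesConstraint

variable {R : Type*} [CommRing R] [NoZeroDivisors R] {x y a c d : R}

theorem eq_or_eq_of_stokes_constraint_of_eq (hxy : x * y = 1)
    (h : a + c + d - a * c * d = x + y) (ha : a = y) : c = x ∨ d = x := by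
  subst ha
  have hfactor : (c - x) * (d - x) = 0 := by
    linear_combination (-x) * h + (-(c * d)) * hxy
  simpa only [mul_eq_zero, sub_eq_zero] using hfactor

theorem eq_or_eq_of_stokes_constraint_of_mul_eq_one (hxy : x * y = 1)
    (h : a + c + d - a * c * d = x + y) (hac : a * c = 1) : a = x ∨ a = y := by
  have hfactor : (a - x) * (a - y) = 0 := by
    linear_combination a * h + (a * d - 1) * hac + hxy
  simpa only [mul_eq_zero, sub_eq_zero] using hfactor

end StokesConstraint

theorem Fin.exists_add_add_sub_mul_mul_eq_three {R : Type*} [CommRing R] (f : Fin 3 → R)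
    {i j : Fin 3} (hij : i ≠ j) :
    ∃ k, f 0 + f 1 + f 2 - f 0 * f 1 * f 2 = f i + f j + f k - f i * f j * f k := by
  fin_cases i <;> fin_cases j <;>
    simp only [Fin.reduceFinMk, Fin.zero_eta, Fin.mk_one, Fin.isValue] <;>
    first
    | exact absurd rfl hij
    | (refine ⟨0, ?_⟩; ring1)
    | (refine ⟨1, ?_⟩; ring1)
    | (refine ⟨2, ?_⟩; ring1)

/-- If Stokes parameters `b 0, b 1, b 2` satisfy the constraint
`b₁ + b₂ + b₃ - b₁b₂b₃ = e^{iπα} + e^{-iπα}` and none of them equals `e^{iπα}`,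
then none equals `e^{-iπα}` and no product of two of them equals `1`. -/
theorem stokes_nondegenerate (α : ℂ) (b : Fin 3 → ℂ)
    (hconstraint : b 0 + b 1 + b 2 - b 0 * b 1 * b 2 =
      Complex.exp (Complex.I * Real.pi * α) + Complex.exp (-(Complex.I * Real.pi * α)))
    (hne : ∀ i, b i ≠ Complex.exp (Complex.I * Real.pi * α)) :
    (∀ i, b i ≠ Complex.exp (-(Complex.I * Real.pi * α))) ∧
      (∀ i j, i ≠ j → b i * b j ≠ 1) := by
  have hxy : exp (I * Real.pi * α) * exp (-(I * Real.pi * α)) = 1 := by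
    rw [← exp_add, add_neg_cancel, exp_zero]
  have hconstraint_perm (i j : Fin 3) (hij : i ≠ j) :
      ∃ k, b i + b j + b k - b i * b j * b k =
        exp (I * Real.pi * α) + exp (-(I * Real.pi * α)) := by
    obtain ⟨k, hk⟩ := Fin.exists_add_add_sub_mul_mul_eq_three b hij
    exact ⟨k, hk ▸ hconstraint⟩
  have hny : ∀ i, b i ≠ exp (-(I * Real.pi * α)) := by
    intro i hi
    obtain ⟨k, hk⟩ := hconstraint_perm i (i + 1) ((by decide : ∀ i : Fin 3, i ≠ i + 1) i)
    rcases eq_or_eq_of_stokes_constraint_of_eq hxy hk hi with h | h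
    exacts [hne _ h, hne _ h]
  refine ⟨hny, fun i j hij hprod => ?_⟩
  obtain ⟨k, hk⟩ := hconstraint_perm i j hij
  rcases eq_or_eq_of_stokes_constraint_of_mul_eq_one hxy hk hprod with h | h
  exacts [hne i h, hny i h]
end

section
/- Let α be a complex number and let b₁, b₂, b₃ be complex numbers satisfying b₁ + b₂ + b₃ - b₁·b₂·b₃ = e^{iπα} + e^{-iπα}, and suppose that bᵢ ≠ e^{iπα} for every i ∈ {1,2,3} and that b₂·b₃ ≠ 1. Define v₂ := 1, v₁ := -(1 - b₂·b₃)/(1 - e^{-iπα}·b₃), and v₃ := (1 - e^{iπα}·b₂)/(1 - e^{-iπα}·b₃). Then v₁ and v₃ are well defined and nonzero, and b₁ = -(e^{iπα}·v₂ + e^{-iπα}·v₃)/v₁, b₂ = -(v₁ + v₃)/(e^{iπα}·v₂), b₃ = -(v₂ + v₁)/(e^{-iπα}·v₃). -/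
open Complex

/-!
Write `e = exp(iπα)` and `f = e⁻¹`. With `v₂ = 1`, the formulas for `b₂` and `b₃` are linear in
`v₁, v₃` and are solved by the given values; the formula for `b₁` is then exactly the relation
`b₁ + b₂ + b₃ - b₁b₂b₃ = e + f`. The common denominator `1 - f b₃` vanishes only if `b₃ = e`, and
`v₃` vanishes only if `b₂ = f`, in which case the relation factors as `(b₁ - e)(1 - f b₃) = 0`.
-/

section StokesField

variable {K : Type*} [Field K] {e f b₁ b₂ b₃ : K}

theorem one_sub_mul_ne_zero_of_ne (hef : e * f = 1) (hb : b₃ ≠ e) : 1 - f * b₃ ≠ 0 := by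
  intro h
  exact hb (by linear_combination -e * h - b₃ * hef)

theorem one_sub_mul_ne_zero_of_stokes (hef : e * f = 1)
    (hc : b₁ + b₂ + b₃ - b₁ * b₂ * b₃ = e + f) (h₁ : b₁ ≠ e) (hD : 1 - f * b₃ ≠ 0) :
    1 - e * b₂ ≠ 0 := by
  intro h
  have hfactor : (b₁ - e) * (1 - f * b₃) = 0 := by
    linear_combination hc - (b₁ * b₃ - 1) * (b₂ * hef + f * h) + b₃ * hef
  exact mul_ne_zero (sub_ne_zero.2 h₁) hD hfactor

theorem stokes_mul_eq_of_boundary (hef : e * f = 1)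
    (hc : b₁ + b₂ + b₃ - b₁ * b₂ * b₃ = e + f) (hD : 1 - f * b₃ ≠ 0) {v₁ v₃ : K}
    (hv₁ : v₁ * (1 - f * b₃) = -(1 - b₂ * b₃)) (hv₃ : v₃ * (1 - f * b₃) = 1 - e * b₂) :
    b₁ * v₁ = -(e + f * v₃) ∧ b₂ * e = -(v₁ + v₃) ∧ b₃ * (f * v₃) = -(1 + v₁) :=
  ⟨mul_right_cancel₀ hD (by linear_combination b₁ * hv₁ + f * hv₃ - hc - (b₂ + b₃) * hef),
    mul_right_cancel₀ hD (by linear_combination hv₁ + hv₃ - b₂ * b₃ * hef),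
    mul_right_cancel₀ hD (by linear_combination f * b₃ * hv₃ + hv₁ - b₂ * b₃ * hef)⟩

end StokesField

theorem stokes_realized_general (α b₁ b₂ b₃ : ℂ)
    (hconstraint : b₁ + b₂ + b₃ - b₁ * b₂ * b₃ =
      Complex.exp (Complex.I * Real.pi * α) + Complex.exp (-(Complex.I * Real.pi * α)))
    (hne₁ : b₁ ≠ Complex.exp (Complex.I * Real.pi * α))
    (hne₃ : b₃ ≠ Complex.exp (Complex.I * Real.pi * α))
    (hprod : b₂ * b₃ ≠ 1)
    (v₁ v₂ v₃ : ℂ)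
    (hv₂ : v₂ = 1)
    (hv₁ : v₁ = -(1 - b₂ * b₃) / (1 - Complex.exp (-(Complex.I * Real.pi * α)) * b₃))
    (hv₃ : v₃ = (1 - Complex.exp (Complex.I * Real.pi * α) * b₂) /
      (1 - Complex.exp (-(Complex.I * Real.pi * α)) * b₃)) :
    (1 - Complex.exp (-(Complex.I * Real.pi * α)) * b₃ ≠ 0) ∧ v₁ ≠ 0 ∧ v₃ ≠ 0 ∧
      b₁ = -(Complex.exp (Complex.I * Real.pi * α) * v₂ +
        Complex.exp (-(Complex.I * Real.pi * α)) * v₃) / v₁ ∧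
      b₂ = -(v₁ + v₃) / (Complex.exp (Complex.I * Real.pi * α) * v₂) ∧
      b₃ = -(v₂ + v₁) / (Complex.exp (-(Complex.I * Real.pi * α)) * v₃) := by
  set e := Complex.exp (Complex.I * Real.pi * α)
  set f := Complex.exp (-(Complex.I * Real.pi * α))
  have hef : e * f = 1 := by rw [← Complex.exp_add, add_neg_cancel, Complex.exp_zero]
  have hD := one_sub_mul_ne_zero_of_ne hef hne₃
  have hN := one_sub_mul_ne_zero_of_stokes hef hconstraint hne₁ hD
  have hv₁ne : v₁ ≠ 0 := hv₁ ▸ div_ne_zero (neg_ne_zero.2 (sub_ne_zero.2 hprod.symm)) hD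
  have hv₃ne : v₃ ≠ 0 := hv₃ ▸ div_ne_zero hN hD
  obtain ⟨h₁, h₂, h₃⟩ := stokes_mul_eq_of_boundary hef hconstraint hD
    ((eq_div_iff hD).1 hv₁) ((eq_div_iff hD).1 hv₃)
  subst hv₂
  refine ⟨hD, hv₁ne, hv₃ne, ?_, ?_, ?_⟩
  · rwa [mul_one, eq_div_iff hv₁ne]
  · rwa [mul_one, eq_div_iff (Complex.exp_ne_zero _)]
  · rwa [eq_div_iff (mul_ne_zero (Complex.exp_ne_zero _) hv₃ne)]

/-- Every nondegenerate Stokes parameter triple `(b₁, b₂, b₃)` is realized by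
boundary values `v₁, v₂, v₃` via the formulas (3.1) of the paper. -/
theorem stokes_realized (α b₁ b₂ b₃ : ℂ)
    (hconstraint : b₁ + b₂ + b₃ - b₁ * b₂ * b₃ =
      Complex.exp (Complex.I * Real.pi * α) + Complex.exp (-(Complex.I * Real.pi * α)))
    (hne₁ : b₁ ≠ Complex.exp (Complex.I * Real.pi * α))
    (hne₂ : b₂ ≠ Complex.exp (Complex.I * Real.pi * α))
    (hne₃ : b₃ ≠ Complex.exp (Complex.I * Real.pi * α))
    (hprod : b₂ * b₃ ≠ 1)
    (v₁ v₂ v₃ : ℂ)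
    (hv₂ : v₂ = 1)
    (hv₁ : v₁ = -(1 - b₂ * b₃) / (1 - Complex.exp (-(Complex.I * Real.pi * α)) * b₃))
    (hv₃ : v₃ = (1 - Complex.exp (Complex.I * Real.pi * α) * b₂) /
      (1 - Complex.exp (-(Complex.I * Real.pi * α)) * b₃)) :
    (1 - Complex.exp (-(Complex.I * Real.pi * α)) * b₃ ≠ 0) ∧ v₁ ≠ 0 ∧ v₃ ≠ 0 ∧
      b₁ = -(Complex.exp (Complex.I * Real.pi * α) * v₂ +
        Complex.exp (-(Complex.I * Real.pi * α)) * v₃) / v₁ ∧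
      b₂ = -(v₁ + v₃) / (Complex.exp (Complex.I * Real.pi * α) * v₂) ∧
      b₃ = -(v₂ + v₁) / (Complex.exp (-(Complex.I * Real.pi * α)) * v₃) :=
  stokes_realized_general α b₁ b₂ b₃ hconstraint hne₁ hne₃ hprod v₁ v₂ v₃ hv₂ hv₁ hv₃
end

section
/- Let a₀, a₁, a₂, a₃ be complex numbers and let r > max{|a₀|, |a₁|, |a₂|, |a₃|}. Suppose w : ℂ → ℂ is holomorphic on {z : |z| > r} and satisfies w(z)² = (z - a₀)(z - a₁)(z - a₂)(z - a₃) there, together with w(z)/z² → 1 as z → ∞. Then for every R > r, (1/(2πi)) ∮_{|z|=R} (z - a₀)/w(z) dz = 1, where the circle |z| = R is traversed counterclockwise. -/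
open Complex Filter Metric Set Topology Bornology Real

/-!
Writing `(z - a₀) / w z = z⁻¹ • g z` with `g z = z (z - a₀) / w z`, the normalization of `w` gives
`g → 1` at infinity. By Cauchy's theorem on annuli the integral of `z⁻¹ • g z` over `|z| = R` does
not depend on `R > r`, while for large `R` it is within `2π sup_{|z|=R} ‖g z - 1‖` of
`∮ z⁻¹ dz = 2πi`.
-/

variable {E : Type*} [NormedAddCommGroup E] [NormedSpace ℂ E] [CompleteSpace E]

/-- The counterpart at `∞` of
`circleIntegral_sub_center_inv_smul_of_differentiable_on_off_countable_of_tendsto`. -/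
theorem circleIntegral_sub_center_inv_smul_of_differentiableOn_compl_closedBall_of_tendsto
    {c : ℂ} {r R : ℝ} (h0 : 0 < R) (hrR : r < R) {f : ℂ → E} {y : E}
    (hd : DifferentiableOn ℂ f (closedBall c r)ᶜ) (hy : Tendsto f (cobounded ℂ) (𝓝 y)) :
    (∮ z in C(c, R), (z - c)⁻¹ • f z) = (2 * π * I : ℂ) • y := by
  have hsub : ∀ {ρ : ℝ}, R ≤ ρ → (ball c ρ)ᶜ ⊆ (closedBall c r)ᶜ := fun hρ z hz hzr =>
    hz <| mem_ball.2 <| (mem_closedBall.1 hzr).trans_lt (hrR.trans_le hρ)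
  rw [← sub_eq_zero, ← norm_le_zero_iff]
  refine le_of_forall_gt_imp_ge_of_dense fun ε ε0 => ?_
  obtain ⟨δ, -, hδ⟩ : ∃ δ, True ∧ ∀ z ∈ (ball c δ)ᶜ, dist (f z) y < ε / (2 * π) :=
    ((hasBasis_cobounded_compl_ball c).tendsto_iff nhds_basis_ball).1 hy _
      (div_pos ε0 Real.two_pi_pos)
  set ρ := max δ R
  have hρ0 : 0 < ρ := h0.trans_le (le_max_right _ _)
  have hzne : ∀ z ∈ sphere c ρ, z ≠ c := fun z hz =>
    ne_of_mem_of_not_mem hz fun h => hρ0.ne' <| dist_self c ▸ Eq.symm h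
  have hsphere : sphere c ρ ⊆ (ball c ρ)ᶜ := fun z hz => by simp [mem_sphere.1 hz]
  calc
    ‖(∮ z in C(c, R), (z - c)⁻¹ • f z) - (2 * ↑π * I) • y‖ =
        ‖(∮ z in C(c, ρ), (z - c)⁻¹ • f z) - ∮ z in C(c, ρ), (z - c)⁻¹ • y‖ := by
      congr 2
      · refine (circleIntegral_sub_center_inv_smul_eq_of_differentiable_on_annulus_off_countable
          h0 (le_max_right _ _) countable_empty ?_ fun z hz => ?_).symm
        · exact hd.continuousOn.mono fun z hz => hsub le_rfl hz.2
        · exact hd.differentiableAt <| isClosed_closedBall.isOpen_compl.mem_nhds <|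
            hsub le_rfl <| compl_subset_compl.2 ball_subset_closedBall hz.1.2
      · simp [hρ0.ne']
    _ = ‖∮ z in C(c, ρ), (z - c)⁻¹ • (f z - y)‖ := by
      simp only [smul_sub]
      have hc' : ContinuousOn (fun z => (z - c)⁻¹) (sphere c ρ) :=
        (continuousOn_id.sub continuousOn_const).inv₀ fun z hz => sub_ne_zero.2 <| hzne _ hz
      rw [circleIntegral.integral_sub] <;> refine (hc'.smul ?_).circleIntegrable hρ0.le
      · exact hd.continuousOn.mono (hsphere.trans (hsub (le_max_right _ _)))
      · exact continuousOn_const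
    _ ≤ 2 * π * ρ * (ρ⁻¹ * (ε / (2 * π))) := by
      refine circleIntegral.norm_integral_le_of_norm_le_const hρ0.le fun z hz => ?_
      rw [norm_smul, norm_inv, ← dist_eq_norm, mem_sphere.1 hz, ← dist_eq_norm]
      refine mul_le_mul_of_nonneg_left (hδ _ ?_).le (inv_nonneg.2 hρ0.le)
      exact compl_subset_compl.2 (ball_subset_ball (le_max_left _ _)) (hsphere hz)
    _ = ε := by field

/-- The residue computation (4.7): for the branch `w` of the square root of the
quartic `(z-a₀)(z-a₁)(z-a₂)(z-a₃)` holomorphic outside a disk containing all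
branch points and normalized by `w(z)/z² → 1` at infinity, the counterclockwise
contour integral of `(z-a₀)/w(z)` over any circle `|z| = R`, `R > r`, divided by
`2πi`, equals `1`. -/
theorem residue_quartic (a₀ a₁ a₂ a₃ : ℂ) (r : ℝ)
    (hr₀ : ‖a₀‖ < r) (hr₁ : ‖a₁‖ < r)
    (hr₂ : ‖a₂‖ < r) (hr₃ : ‖a₃‖ < r)
    (w : ℂ → ℂ)
    (hw : DifferentiableOn ℂ w {z : ℂ | r < ‖z‖})
    (hsq : ∀ z : ℂ, r < ‖z‖ →
      (w z) ^ 2 = (z - a₀) * (z - a₁) * (z - a₂) * (z - a₃))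
    (hlim : Tendsto (fun z : ℂ => w z / z ^ 2) (Bornology.cobounded ℂ) (nhds 1)) :
    ∀ R : ℝ, r < R →
      (1 / (2 * Real.pi * Complex.I)) * (∮ z in C(0, R), (z - a₀) / w z) = 1 := by
  intro R hR
  have hext : {z : ℂ | r < ‖z‖} = (closedBall 0 r)ᶜ := by ext; simp
  have hwne : ∀ z : ℂ, r < ‖z‖ → w z ≠ 0 := fun z hz => by
    have hne : ∀ a : ℂ, ‖a‖ < r → z - a ≠ 0 := fun a ha =>
      sub_ne_zero.2 fun h => (ha.trans (h ▸ hz)).false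
    refine (pow_ne_zero_iff two_ne_zero).1 ?_
    rw [hsq z hz]
    exact mul_ne_zero (mul_ne_zero (mul_ne_zero (hne _ hr₀) (hne _ hr₁)) (hne _ hr₂)) (hne _ hr₃)
  have hg : DifferentiableOn ℂ (fun z => z * (z - a₀) / w z) (closedBall 0 r)ᶜ := by
    rw [← hext]
    exact (differentiableOn_id.mul (differentiableOn_id.sub_const a₀)).div hw hwne
  have hg_lim : Tendsto (fun z : ℂ => z * (z - a₀) / w z) (cobounded ℂ) (𝓝 1) := by
    have h := ((tendsto_const_nhds (x := (1 : ℂ))).sub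
      (tendsto_inv₀_cobounded.const_mul a₀)).div hlim one_ne_zero
    simp only [mul_zero, sub_zero, div_one] at h
    refine h.congr' ((eventually_ne_cobounded 0).mono fun z hz => ?_)
    simp only [Pi.div_apply]
    field_simp
  have hR0 : 0 < R := (norm_nonneg a₀).trans_lt (hr₀.trans hR)
  have hcongr : EqOn (fun z => (z - a₀) / w z) (fun z => (z - 0)⁻¹ • (z * (z - a₀) / w z))
      (sphere 0 R) := fun z hz => by
    have hz0 : z ≠ 0 := ne_zero_of_mem_sphere hR0.ne' ⟨z, hz⟩
    simp only [sub_zero, smul_eq_mul]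
    field_simp
  rw [circleIntegral.integral_congr hR0.le hcongr,
    circleIntegral_sub_center_inv_smul_of_differentiableOn_compl_closedBall_of_tendsto hR0 hR hg
      hg_lim, smul_eq_mul, mul_one]
  field_simp
end

section
/- Let ν, s₀ be complex numbers and let q be analytic on a punctured disk {s : 0 < |s - s₀| < δ}, satisfying the Painlevé II equation q''(s) = s·q(s) + 2·q(s)³ - ν there. Suppose q has a pole at s₀, i.e., q is given near s₀ by a convergent Laurent series q(s) = Σ_{k ≥ -m} c_k·(s - s₀)^k with m ≥ 1 and c_{-m} ≠ 0. Then m = 1 (the pole is simple) and the residue c_{-1} equals 1 or -1. -/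
/-!
Write `t = s - s₀` and let the pole have order `k + 1`. Then `F = t ^ (k + 1) * q` is analytic
at `s₀` with `F s₀ = c₋ₖ₋₁ ≠ 0`, and multiplying Painlevé II by `t ^ (3k + 3)` turns it into an
identity between functions that are analytic at `s₀`. Evaluated at `s₀` it only retains the
contribution `(k + 1) (k + 2) t ^ (2k) F` of `q''` and the contribution `2 F³` of `2 q³`: the
cube is the most singular term, and `q''` can only balance it when `k = 0`, in which case
`2 F(s₀) = 2 F(s₀)³`, i.e. `F(s₀) = c₋₁ = ±1`.
-/

open Filter Topology

theorem eventually_nhdsNE_of_forall_ball {E : Type*} [NormedAddCommGroup E] {x : E} {δ : ℝ}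
    {P : E → Prop} (hδ : 0 < δ) (h : ∀ y, 0 < ‖y - x‖ → ‖y - x‖ < δ → P y) :
    ∀ᶠ y in 𝓝[≠] x, P y := by
  filter_upwards [eventually_nhdsWithin_of_eventually_nhds (Metric.ball_mem_nhds x hδ),
    self_mem_nhdsWithin] with y hy hne
  exact h y (norm_pos_iff.mpr (sub_ne_zero.mpr hne)) (by rwa [← dist_eq_norm])

theorem hasSum_nat_mul_pow_of_hasSum_zpow {K : Type*} [Field K] [TopologicalSpace K]
    [IsTopologicalRing K] {c : ℤ → K} {m : ℕ} {t x : K}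
    (hc : ∀ k : ℤ, k < -(m : ℤ) → c k = 0) (ht : t ≠ 0)
    (h : HasSum (fun k : ℤ => c k * t ^ k) x) :
    HasSum (fun n : ℕ => c (n - m) * t ^ n) (t ^ m * x) := by
  have hinj : Function.Injective fun n : ℕ => (n : ℤ) - m := fun a b hab => by simpa using hab
  have hshift := (hinj.hasSum_iff (f := fun k : ℤ => t ^ m * (c k * t ^ k)) ?_).mpr
    (h.mul_left _)
  · refine hshift.congr_fun fun n => ?_
    simp only [Function.comp_apply, mul_left_comm (t ^ m)]
    rw [← zpow_natCast t m, ← zpow_add₀ ht, add_sub_cancel, zpow_natCast]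
  · intro k hk
    rw [hc k ?_, zero_mul, mul_zero]
    by_contra hle
    exact hk ⟨(k + m).toNat, by simp only; omega⟩

section NontriviallyNormedField

variable {𝕜 : Type*} [NontriviallyNormedField 𝕜] {z z₀ : 𝕜}

theorem exists_analyticAt_eventuallyEq_of_hasSum_nhdsNE [CompleteSpace 𝕜] {a : ℕ → 𝕜}
    {w : 𝕜 → 𝕜} (h : ∀ᶠ z in 𝓝[≠] z₀, HasSum (fun n => a n * (z - z₀) ^ n) (w z)) :
    ∃ F : 𝕜 → 𝕜, AnalyticAt 𝕜 F z₀ ∧ F z₀ = a 0 ∧ F =ᶠ[𝓝[≠] z₀] w := by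
  set p := FormalMultilinearSeries.ofScalars 𝕜 a
  obtain ⟨z₁, hz₁, hne⟩ := (h.and self_mem_nhdsWithin).exists
  have hrad : (‖z₁ - z₀‖₊ : ENNReal) ≤ p.radius := by
    refine p.le_radius_of_tendsto (l := 0) ?_
    simpa [p, FormalMultilinearSeries.ofScalars_norm, norm_mul, norm_pow]
      using hz₁.summable.tendsto_atTop_zero.norm
  have hpos : 0 < p.radius := lt_of_lt_of_le (by simpa [sub_eq_zero] using hne) hrad
  have hF := (p.hasFPowerSeriesOnBall hpos).comp_sub z₀
  rw [zero_add] at hF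
  refine ⟨fun z => p.sum (z - z₀), hF.analyticAt, ?_, ?_⟩
  · simpa [p] using (hF.coeff_zero fun _ => 0).symm
  · filter_upwards [h, eventually_nhdsWithin_of_eventually_nhds hF.eventually_hasSum_sub]
      with z hz hzF
    refine hzF.unique (hz.congr_fun fun n => ?_)
    simp [p, mul_comm]

theorem eventuallyEq_nhdsNE_of_hasDerivAt {E : Type*} [NormedAddCommGroup E] [NormedSpace 𝕜 E]
    {f g f' g' : 𝕜 → E} (hfg : f =ᶠ[𝓝[≠] z₀] g)
    (hf : ∀ᶠ z in 𝓝[≠] z₀, HasDerivAt f (f' z) z)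
    (hg : ∀ᶠ z in 𝓝[≠] z₀, HasDerivAt g (g' z) z) : f' =ᶠ[𝓝[≠] z₀] g' := by
  filter_upwards [eventually_nhdsNE_eventually_nhds_iff.mpr hfg, hf, hg] with z hz hfz hgz
  exact hfz.unique (hgz.congr_of_eventuallyEq hz)

theorem hasDerivAt_sub_zpow_mul {F : 𝕜 → 𝕜} {F' : 𝕜} (N : ℤ) (hz : z ≠ z₀)
    (hF : HasDerivAt F F' z) :
    HasDerivAt (fun y => (y - z₀) ^ N * F y)
      (N * (z - z₀) ^ (N - 1) * F z + (z - z₀) ^ N * F') z := by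
  have := ((hasDerivAt_zpow N (z - z₀) (.inl (sub_ne_zero.mpr hz))).comp z
    ((hasDerivAt_id z).sub_const z₀)).mul hF
  simpa [Function.comp_def, Pi.mul_def] using this

theorem hasDerivAt_sub_zpow_mul_second {F F' : 𝕜 → 𝕜} {F'' : 𝕜} (N : ℤ) (hz : z ≠ z₀)
    (hF : HasDerivAt F (F' z) z) (hF' : HasDerivAt F' F'' z) :
    HasDerivAt (fun y => N * (y - z₀) ^ (N - 1) * F y + (y - z₀) ^ N * F' y)
      (N * (N - 1) * (z - z₀) ^ (N - 2) * F z + 2 * N * (z - z₀) ^ (N - 1) * F' z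
        + (z - z₀) ^ N * F'') z := by
  have := ((hasDerivAt_sub_zpow_mul (N - 1) hz hF).const_mul (N : 𝕜)).add
    (hasDerivAt_sub_zpow_mul N hz hF')
  simp only [Pi.add_def, ← mul_assoc] at this
  refine this.congr_deriv ?_
  rw [sub_sub, one_add_one_eq_two]
  push_cast
  ring

theorem eventuallyEq_second_deriv_of_eventuallyEq_sub_zpow_mul [CompleteSpace 𝕜]
    {q q' q'' F : 𝕜 → 𝕜} (N : ℤ) (hF : AnalyticAt 𝕜 F z₀)
    (hqF : q =ᶠ[𝓝[≠] z₀] fun z => (z - z₀) ^ N * F z)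
    (hq : ∀ᶠ z in 𝓝[≠] z₀, HasDerivAt q (q' z) z)
    (hq' : ∀ᶠ z in 𝓝[≠] z₀, HasDerivAt q' (q'' z) z) :
    q'' =ᶠ[𝓝[≠] z₀] fun z => N * (N - 1) * (z - z₀) ^ (N - 2) * F z
      + 2 * N * (z - z₀) ^ (N - 1) * deriv F z + (z - z₀) ^ N * deriv (deriv F) z := by
  have hFan : ∀ᶠ z in 𝓝[≠] z₀, AnalyticAt 𝕜 F z ∧ z ≠ z₀ :=
    (eventually_nhdsWithin_of_eventually_nhds hF.eventually_analyticAt).and self_mem_nhdsWithin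
  have hq'F := eventuallyEq_nhdsNE_of_hasDerivAt hqF hq <| hFan.mono fun z ⟨hz, hne⟩ =>
    hasDerivAt_sub_zpow_mul N hne hz.differentiableAt.hasDerivAt
  exact eventuallyEq_nhdsNE_of_hasDerivAt hq'F hq' <| hFan.mono fun z ⟨hz, hne⟩ =>
    hasDerivAt_sub_zpow_mul_second N hne hz.differentiableAt.hasDerivAt
      hz.deriv.differentiableAt.hasDerivAt

end NontriviallyNormedField

section PainleveII

/-- `(s - s₀) ^ (3k + 3) * (q'' - s q - 2 q³ + ν)` for `q = (s - s₀) ^ (-(k + 1)) * F`,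
expanded so that it is visibly analytic wherever `F` is. -/
noncomputable def painleveIICleared (ν s₀ : ℂ) (k : ℕ) (F : ℂ → ℂ) (s : ℂ) : ℂ :=
  (k + 1) * (k + 2) * (s - s₀) ^ (2 * k) * F s
    - 2 * (k + 1) * (s - s₀) ^ (2 * k + 1) * deriv F s
    + (s - s₀) ^ (2 * k + 2) * deriv (deriv F) s
    - s * (s - s₀) ^ (2 * k + 2) * F s - 2 * F s ^ 3 + ν * (s - s₀) ^ (3 * k + 3)

variable {ν s₀ : ℂ} {k : ℕ} {F : ℂ → ℂ}

theorem painleveIICleared_eq {s : ℂ} {N : ℤ} (hN : N = -(k + 1 : ℤ)) (hs : s ≠ s₀) :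
    painleveIICleared ν s₀ k F s = (s - s₀) ^ (3 * k + 3) *
      (N * (N - 1) * (s - s₀) ^ (N - 2) * F s + 2 * N * (s - s₀) ^ (N - 1) * deriv F s
        + (s - s₀) ^ N * deriv (deriv F) s
        - (s * ((s - s₀) ^ N * F s) + 2 * ((s - s₀) ^ N * F s) ^ 3 - ν)) := by
  have ht : s - s₀ ≠ 0 := sub_ne_zero.mpr hs
  subst hN
  simp only [painleveIICleared, zpow_sub₀ ht, zpow_neg]
  norm_cast
  field_simp
  push_cast
  ring

theorem continuousAt_painleveIICleared {s : ℂ} (hF : AnalyticAt ℂ F s) :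
    ContinuousAt (painleveIICleared ν s₀ k F) s := by
  have h₀ := hF.continuousAt
  have h₁ := hF.deriv.continuousAt
  have h₂ := hF.deriv.deriv.continuousAt
  unfold painleveIICleared
  fun_prop

theorem painleveIICleared_self_eq_zero_iff (hF : F s₀ ≠ 0) :
    painleveIICleared ν s₀ k F s₀ = 0 ↔ k = 0 ∧ (F s₀ = 1 ∨ F s₀ = -1) := by
  rcases k with _ | k
  · have hfactor : 2 * F s₀ - 2 * F s₀ ^ 3 = -2 * F s₀ * ((F s₀ - 1) * (F s₀ + 1)) := by ring
    simp [painleveIICleared, hfactor, hF, sub_eq_zero, add_eq_zero_iff_eq_neg]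
  · simp [painleveIICleared, hF]

end PainleveII

/-- Any pole of a Painlevé II transcendent is simple with residue `±1`:
if `q` is given on a punctured disk around `s₀` by a convergent Laurent
series with leading term `c₋ₘ (s - s₀)^{-m}`, `m ≥ 1`, `c₋ₘ ≠ 0`, and `q`
solves `q'' = s q + 2 q³ - ν` there, then `m = 1` and `c₋₁ ∈ {1, -1}`. -/
theorem PII_pole_simple_residue (ν s₀ : ℂ) (δ : ℝ) (hδ : 0 < δ)
    (q q' q'' : ℂ → ℂ) (m : ℕ) (hm : 1 ≤ m) (c : ℤ → ℂ)
    (hc_bot : ∀ k : ℤ, k < -(m : ℤ) → c k = 0)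
    (hc_lead : c (-(m : ℤ)) ≠ 0)
    (hsum : ∀ s : ℂ, 0 < ‖s - s₀‖ → ‖s - s₀‖ < δ →
      HasSum (fun k : ℤ => c k * (s - s₀) ^ k) (q s))
    (hq : ∀ s : ℂ, 0 < ‖s - s₀‖ → ‖s - s₀‖ < δ →
      HasDerivAt q (q' s) s)
    (hq' : ∀ s : ℂ, 0 < ‖s - s₀‖ → ‖s - s₀‖ < δ →
      HasDerivAt q' (q'' s) s)
    (hPII : ∀ s : ℂ, 0 < ‖s - s₀‖ → ‖s - s₀‖ < δ →
      q'' s = s * q s + 2 * (q s) ^ 3 - ν) :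
    m = 1 ∧ (c (-1) = 1 ∨ c (-1) = -1) := by
  obtain ⟨k, rfl⟩ : ∃ k, m = k + 1 := ⟨m - 1, by omega⟩
  have hpunct : ∀ᶠ s in 𝓝[≠] s₀, s ≠ s₀ := self_mem_nhdsWithin
  have htaylor : ∀ᶠ s in 𝓝[≠] s₀, HasSum (fun n : ℕ => c (n - (k + 1 : ℕ)) * (s - s₀) ^ n)
      ((s - s₀) ^ (k + 1) * q s) := by
    filter_upwards [eventually_nhdsNE_of_forall_ball hδ hsum, hpunct] with s hs hne
    exact hasSum_nat_mul_pow_of_hasSum_zpow hc_bot (sub_ne_zero.mpr hne) hs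
  obtain ⟨F, hF, hF₀, hFq⟩ := exists_analyticAt_eventuallyEq_of_hasSum_nhdsNE htaylor
  have hqF : q =ᶠ[𝓝[≠] s₀] fun s => (s - s₀) ^ (-(k + 1 : ℤ)) * F s := by
    filter_upwards [hFq, hpunct] with s hs hne
    rw [hs, ← mul_assoc, ← zpow_natCast, ← zpow_add₀ (sub_ne_zero.mpr hne)]
    simp
  have hq'' := eventuallyEq_second_deriv_of_eventuallyEq_sub_zpow_mul _ hF hqF
    (eventually_nhdsNE_of_forall_ball hδ hq) (eventually_nhdsNE_of_forall_ball hδ hq')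
  have hcleared : painleveIICleared ν s₀ k F =ᶠ[𝓝[≠] s₀] 0 := by
    filter_upwards [hqF, hq'', eventually_nhdsNE_of_forall_ball hδ hPII, hpunct]
      with s hs₀ hs₂ hs hne
    rw [painleveIICleared_eq rfl hne, ← hs₀, ← hs₂, hs, sub_self, mul_zero, Pi.zero_apply]
  have hcleared₀ : painleveIICleared ν s₀ k F s₀ = 0 :=
    ((continuousAt_painleveIICleared hF).eventuallyEq_nhds_iff_eventuallyEq_nhdsNE
      continuousAt_const).mp hcleared |>.eq_of_nhds
  have hF₀ne : F s₀ ≠ 0 := by simpa [hF₀] using hc_lead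
  obtain ⟨rfl, hres⟩ := (painleveIICleared_self_eq_zero_iff hF₀ne).mp hcleared₀
  exact ⟨rfl, by simpa [hF₀] using hres⟩
end

section
/- Let ν be a complex number, α := ν - 1/2, and let q be analytic on an open set D ⊆ ℂ satisfying the Painlevé II equation q''(s) = s·q(s) + 2·q(s)³ - ν on D. For x with s = -2^{1/3}·x ∈ D, define u(x) := 2^{-1/3}·(q'(s) + q(s)² + s/2). Then α - u'(x) = 2^{4/3}·u(x)·q(s), where u' denotes the derivative with respect to x. -/
open Complex

/-
Writing `F(s) = q'(s) + q(s)² + s/2`, the Painlevé II equation turns `F` into a solution of the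
linear equation `F' = 2qF - α` with `α = ν - 1/2`. Since `u(x) = 2^{-1/3} F(-2^{1/3} x)`, the chain
rule gives `u'(x) = -F'(s)`, while `2^{4/3} u(x) = 2 F(s)`; the identity is `F' = 2qF - α` rewritten.
-/

theorem hasDerivAt_deriv_add_sq_add_half_of_painleveII {ν s : ℂ} {q q' q'' : ℂ → ℂ}
    (hq : HasDerivAt q (q' s) s) (hq' : HasDerivAt q' (q'' s) s)
    (hPII : q'' s = s * q s + 2 * q s ^ 3 - ν) :
    HasDerivAt (fun t => q' t + q t ^ 2 + t / 2)
      (2 * q s * (q' s + q s ^ 2 + s / 2) - (ν - 1 / 2)) s := by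
  refine ((hq'.add (hq.pow 2)).add ((hasDerivAt_id' s).div_const 2)).congr_deriv ?_
  rw [hPII]
  push_cast
  ring

theorem hasDerivAt_const_mul_comp_neg_mul {f : ℂ → ℂ} {f' a c x : ℂ}
    (hf : HasDerivAt f f' (-(a * x))) :
    HasDerivAt (fun y => c * f (-(a * y))) (-(c * a) * f') x := by
  have hlin : HasDerivAt (fun y : ℂ => -(a * y)) (-a) x := by
    simpa only [neg_mul, mul_one] using (hasDerivAt_id' x).const_mul (-a)
  refine ((hf.comp x hlin).const_mul c).congr_deriv ?_
  ring

theorem PXXXIV_derivative_identity_general (ν α : ℂ) (hα : α = ν - 1/2)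
    (D : Set ℂ) (q q' q'' : ℂ → ℂ)
    (hq : ∀ s ∈ D, HasDerivAt q (q' s) s)
    (hq' : ∀ s ∈ D, HasDerivAt q' (q'' s) s)
    (hPII : ∀ s ∈ D, q'' s = s * q s + 2 * (q s) ^ 3 - ν)
    (u : ℂ → ℂ)
    (hu : ∀ x : ℂ, u x = (2 : ℂ) ^ (-(1 : ℂ)/3) *
      (q' (-((2 : ℂ) ^ ((1 : ℂ)/3) * x)) + (q (-((2 : ℂ) ^ ((1 : ℂ)/3) * x))) ^ 2 +
        (-((2 : ℂ) ^ ((1 : ℂ)/3) * x)) / 2)) :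
    ∀ x : ℂ, -((2 : ℂ) ^ ((1 : ℂ)/3) * x) ∈ D →
      α - deriv u x = (2 : ℂ) ^ ((4 : ℂ)/3) * u x * q (-((2 : ℂ) ^ ((1 : ℂ)/3) * x)) := by
  intro x hs
  set s := -((2 : ℂ) ^ ((1 : ℂ)/3) * x)
  have hF := hasDerivAt_deriv_add_sq_add_half_of_painleveII (hq s hs) (hq' s hs) (hPII s hs)
  have hu' := hasDerivAt_const_mul_comp_neg_mul (c := (2 : ℂ) ^ (-(1 : ℂ)/3)) hF
  rw [← funext hu] at hu'
  have hscale_inv : (2 : ℂ) ^ (-(1 : ℂ)/3) * 2 ^ ((1 : ℂ)/3) = 1 := by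
    rw [← cpow_add _ _ two_ne_zero]
    norm_num
  have hscale_four_thirds : (2 : ℂ) ^ ((4 : ℂ)/3) * 2 ^ (-(1 : ℂ)/3) = 2 := by
    rw [← cpow_add _ _ two_ne_zero]
    norm_num
  rw [hu'.deriv, hu x, hα, hscale_inv]
  linear_combination (-(q' s + q s ^ 2 + s / 2) * q s) * hscale_four_thirds

/-- The identity `α - u'(x) = 2^{4/3} u(x) q(s)` relating the Painlevé XXXIV
function `u(x) = 2^{-1/3}(q'(s) + q(s)² + s/2)`, `s = -2^{1/3} x`, to the
Painlevé II transcendent `q` with parameter `ν = α + 1/2`. -/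
theorem PXXXIV_derivative_identity (ν α : ℂ) (hα : α = ν - 1/2)
    (D : Set ℂ) (hD : IsOpen D) (q q' q'' : ℂ → ℂ)
    (hq : ∀ s ∈ D, HasDerivAt q (q' s) s)
    (hq' : ∀ s ∈ D, HasDerivAt q' (q'' s) s)
    (hPII : ∀ s ∈ D, q'' s = s * q s + 2 * (q s) ^ 3 - ν)
    (u : ℂ → ℂ)
    (hu : ∀ x : ℂ, u x = (2 : ℂ) ^ (-(1 : ℂ)/3) *
      (q' (-((2 : ℂ) ^ ((1 : ℂ)/3) * x)) + (q (-((2 : ℂ) ^ ((1 : ℂ)/3) * x))) ^ 2 +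
        (-((2 : ℂ) ^ ((1 : ℂ)/3) * x)) / 2)) :
    ∀ x : ℂ, -((2 : ℂ) ^ ((1 : ℂ)/3) * x) ∈ D →
      α - deriv u x = (2 : ℂ) ^ ((4 : ℂ)/3) * u x * q (-((2 : ℂ) ^ ((1 : ℂ)/3) * x)) :=
  PXXXIV_derivative_identity_general ν α hα D q q' q'' hq hq' hPII u hu
end

section
/- Let η := exp(2πi/3), let n be a positive integer, let Q be a polynomial with complex coefficients, and let ρ̂ : ℝ → ℂ be continuous on [-1, 0]. Suppose ∫_{-1}^{0} x^m·Q(x)·ρ̂(x) dx = 0 for every m ∈ {0, 1, ..., n-1}. Then for every integer k with 0 ≤ k ≤ 3n + 1, Σ_{j=0}^{2} η^{j(k+1)} · ∫_{-1}^{0} t^k·Q(t³)·ρ̂(t³) dt = 0. -/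
/-!
Write `η = exp(2πi/3)` and `I_k = ∫_{-1}^{0} t^k Q(t³) ρ̂(t³) dt`; the sum is
`(Σ_{j<3} (η^(k+1))^j) · I_k`. If `3 ∤ k + 1` then `η^(k+1)` is a nontrivial cube root of
unity, so the geometric sum vanishes. If `k = 3m + 2`, the substitution `x = t³` turns `I_k`
into `⅓ ∫_{-1}^{0} x^m Q(x) ρ̂(x) dx`, which vanishes by orthogonality since `k ≤ 3n + 1`
forces `m < n`.
-/

open Complex

theorem IsPrimitiveRoot.sum_range_pow_mul_eq_zero {R : Type*} [CommRing R] [IsDomain R]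
    {ζ : R} {p k : ℕ} (hζ : IsPrimitiveRoot ζ p) (hk : ¬ p ∣ k) :
    ∑ j ∈ Finset.range p, ζ ^ (j * k) = 0 := by
  have hne : ζ ^ k ≠ 1 := fun h => hk (hζ.pow_eq_one_iff_dvd k |>.mp h)
  have hpow : (ζ ^ k) ^ p = 1 := by rw [← pow_mul, mul_comm, pow_mul, hζ.pow_eq_one, one_pow]
  refine eq_zero_of_ne_zero_of_mul_left_eq_zero (sub_ne_zero_of_ne hne.symm) ?_
  simp_rw [mul_comm _ k, pow_mul]
  rw [mul_neg_geom_sum, hpow, sub_self]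

theorem intervalIntegral.integral_smul_comp_cube {E : Type*} [NormedAddCommGroup E]
    [NormedSpace ℝ E] [CompleteSpace E] {a b : ℝ} {g : ℝ → E}
    (hg : ContinuousOn g (Set.uIcc (a ^ 3) (b ^ 3))) :
    ∫ t in a..b, (3 * t ^ 2) • g (t ^ 3) = ∫ x in a ^ 3..b ^ 3, g x :=
  integral_deriv_smul_comp' (fun t _ => by simpa using hasDerivAt_pow 3 t) (by fun_prop)
    (hg.mono ((Odd.strictMono_pow (by decide)).monotone.image_uIcc_subset))

theorem trefoil_orthogonality_general (n : ℕ) (Q : Polynomial ℂ) (ρ : ℝ → ℂ)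
    (hρ : ContinuousOn ρ (Set.Icc (-1 : ℝ) 0))
    (horth : ∀ m : ℕ, m < n →
      ∫ x in (-1 : ℝ)..0, (x : ℂ) ^ m * Q.eval (x : ℂ) * ρ x = 0) :
    ∀ k : ℕ, k ≤ 3 * n + 1 →
      ∑ j ∈ Finset.range 3,
        Complex.exp (2 * Real.pi * Complex.I / 3) ^ (j * (k + 1)) *
          ∫ t in (-1 : ℝ)..0, (t : ℂ) ^ k * Q.eval ((t : ℂ) ^ 3) * ρ (t ^ 3) = 0 := by
  intro k hk
  rw [← Finset.sum_mul]
  by_cases h3 : 3 ∣ k + 1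
  · obtain ⟨m, rfl⟩ : ∃ m, k = 3 * m + 2 := ⟨(k + 1) / 3 - 1, by omega⟩
    set g : ℝ → ℂ := fun x => (x : ℂ) ^ m * Q.eval (x : ℂ) * ρ x
    have hg : ContinuousOn g (Set.uIcc ((-1) ^ 3) (0 ^ 3)) := by
      rw [show (-1 : ℝ) ^ 3 = -1 by norm_num, zero_pow three_ne_zero,
        Set.uIcc_of_le (by norm_num)]
      exact ((continuous_ofReal.pow m).mul (Q.continuous.comp continuous_ofReal)).continuousOn.mul
        hρ
    have hintegrand : ∀ t : ℝ, (t : ℂ) ^ (3 * m + 2) * Q.eval ((t : ℂ) ^ 3) * ρ (t ^ 3)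
        = 3⁻¹ * ((3 * t ^ 2) • g (t ^ 3)) := fun t => by
      simp only [g, Complex.real_smul]; push_cast; ring
    simp_rw [hintegrand, intervalIntegral.integral_const_mul,
      intervalIntegral.integral_smul_comp_cube hg]
    norm_num [g, horth m (by omega)]
  · have hη : IsPrimitiveRoot (Complex.exp (2 * Real.pi * Complex.I / 3)) 3 := by
      simpa using Complex.isPrimitiveRoot_exp 3 (by norm_num)
    rw [hη.sum_range_pow_mul_eq_zero h3, zero_mul]

/-- If `Q` is orthogonal to `x^m`, `m < n`, on `[-1, 0]` with weight `ρ̂`, then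
for every `k ≤ 3n + 1`,
`Σ_{j=0}^{2} η^{j(k+1)} ∫_{-1}^{0} t^k Q(t³) ρ̂(t³) dt = 0`, where
`η = exp(2πi/3)`. -/
theorem trefoil_orthogonality (n : ℕ) (hn : 0 < n) (Q : Polynomial ℂ) (ρ : ℝ → ℂ)
    (hρ : ContinuousOn ρ (Set.Icc (-1 : ℝ) 0))
    (horth : ∀ m : ℕ, m < n →
      ∫ x in (-1 : ℝ)..0, (x : ℂ) ^ m * Q.eval (x : ℂ) * ρ x = 0) :
    ∀ k : ℕ, k ≤ 3 * n + 1 →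
      ∑ j ∈ Finset.range 3,
        Complex.exp (2 * Real.pi * Complex.I / 3) ^ (j * (k + 1)) *
          ∫ t in (-1 : ℝ)..0, (t : ℂ) ^ k * Q.eval ((t : ℂ) ^ 3) * ρ (t ^ 3) = 0 :=
  trefoil_orthogonality_general n Q ρ hρ horth
end

section
/- Let α₀, α₁, α₂, α₃ be real numbers such that α₀ + α₁ + α₂ + α₃ is an integer and none of α₁, α₂, α₃ is an integer. Define v₁ := 1 - e^{2πi·α₁}, v₂ := e^{2πi·α₁}·(1 - e^{2πi·α₂}), v₃ := e^{-2πi·α₃} - 1. Then v₁, v₂, v₃ are nonzero and: (i) -(e^{iπα₀}·v₂ + e^{-iπα₀}·v₃)/v₁ = sin((α₀ + α₁)π)/sin(α₁π); (ii) -(v₁ + v₃)/(e^{iπα₀}·v₂) = sin((α₀ + α₂)π)/sin(α₂π); (iii) -(v₂ + v₁)/(e^{-iπα₀}·v₃) = sin((α₀ + α₃)π)/sin(α₃π). -/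
open Complex

open scoped Real

/-! With `e_k = e^{iπα_k}` one has `e^{2πiα_k} = e_k²` and
`sin((α₀ + α_i)π) / sin(α_iπ) = ((e₀e_i)⁻¹ - e₀e_i) / (e_i⁻¹ - e_i)`, so each identity becomes a
rational identity in the `e_k`. Integrality of `α₀ + α₁ + α₂ + α₃` is the relation
`(e₀e₁e₂e₃)² = 1`, which is all the identities need, and non-integrality of `α_i` gives
`e_i² ≠ 1`, so the denominators do not vanish. -/

section StokesAlgebra

variable {K : Type*} [Field K] {e₀ e₁ e₂ e₃ : K}

theorem ne_zero_of_prod_sq_eq_one (h : (e₀ * e₁ * e₂ * e₃) ^ 2 = 1) :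
    e₀ ≠ 0 ∧ e₁ ≠ 0 ∧ e₂ ≠ 0 ∧ e₃ ≠ 0 := by
  have h' : e₀ * e₁ * e₂ * e₃ ≠ 0 := by
    rintro h0
    simp [h0] at h
  simp only [mul_ne_zero_iff] at h'
  tauto

theorem stokes_param_one (h : (e₀ * e₁ * e₂ * e₃) ^ 2 = 1) (h₁ : e₁ ^ 2 ≠ 1) :
    -(e₀ * (e₁ ^ 2 * (1 - e₂ ^ 2)) + e₀⁻¹ * ((e₃ ^ 2)⁻¹ - 1)) / (1 - e₁ ^ 2) =
      ((e₀ * e₁)⁻¹ - e₀ * e₁) / (e₁⁻¹ - e₁) := by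
  obtain ⟨h0, h1, h2, h3⟩ := ne_zero_of_prod_sq_eq_one h
  have : 1 - e₁ ^ 2 ≠ 0 := sub_ne_zero.mpr h₁.symm
  field_simp
  linear_combination h

theorem stokes_param_two (h : (e₀ * e₁ * e₂ * e₃) ^ 2 = 1) (h₂ : e₂ ^ 2 ≠ 1) :
    -((1 - e₁ ^ 2) + ((e₃ ^ 2)⁻¹ - 1)) / (e₀ * (e₁ ^ 2 * (1 - e₂ ^ 2))) =
      ((e₀ * e₂)⁻¹ - e₀ * e₂) / (e₂⁻¹ - e₂) := by
  obtain ⟨h0, h1, h2, h3⟩ := ne_zero_of_prod_sq_eq_one h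
  have : 1 - e₂ ^ 2 ≠ 0 := sub_ne_zero.mpr h₂.symm
  field_simp
  linear_combination h

theorem stokes_param_three (h : (e₀ * e₁ * e₂ * e₃) ^ 2 = 1) (h₃ : e₃ ^ 2 ≠ 1) :
    -(e₁ ^ 2 * (1 - e₂ ^ 2) + (1 - e₁ ^ 2)) / (e₀⁻¹ * ((e₃ ^ 2)⁻¹ - 1)) =
      ((e₀ * e₃)⁻¹ - e₀ * e₃) / (e₃⁻¹ - e₃) := by
  obtain ⟨h0, h1, h2, h3⟩ := ne_zero_of_prod_sq_eq_one h
  have : 1 - e₃ ^ 2 ≠ 0 := sub_ne_zero.mpr h₃.symm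
  field_simp
  linear_combination h

end StokesAlgebra

theorem exp_I_pi_mul_sq (x : ℝ) : cexp (I * π * x) ^ 2 = cexp (2 * π * I * x) := by
  rw [← exp_nat_mul]; ring_nf

theorem exp_I_pi_mul_add (x y : ℝ) :
    cexp (I * π * ↑(x + y)) = cexp (I * π * x) * cexp (I * π * y) := by
  rw [← exp_add]; push_cast; ring_nf

theorem exp_I_pi_mul_sq_ne_one {x : ℝ} (hx : ∀ m : ℤ, x ≠ m) : cexp (I * π * x) ^ 2 ≠ 1 := by
  rw [exp_I_pi_mul_sq, Ne, exp_eq_one_iff]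
  rintro ⟨m, hm⟩
  refine hx m (ofReal_injective ?_)
  push_cast
  exact mul_right_cancel₀ two_pi_I_ne_zero (by linear_combination hm)

theorem exp_I_pi_mul_int_sq (m : ℤ) : cexp (I * π * ((m : ℝ) : ℂ)) ^ 2 = 1 := by
  rw [exp_I_pi_mul_sq, ← exp_int_mul_two_pi_mul_I m]; push_cast; ring_nf

theorem ofReal_sin_mul_pi (x : ℝ) :
    ((Real.sin (x * π) : ℝ) : ℂ) = ((cexp (I * π * x))⁻¹ - cexp (I * π * x)) * (I / 2) := by
  rw [ofReal_sin, Complex.sin, ← exp_neg]; push_cast; ring_nf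

theorem ofReal_sin_add_mul_pi_div_sin_mul_pi (x y : ℝ) :
    ((Real.sin ((x + y) * π) / Real.sin (y * π) : ℝ) : ℂ) =
      ((cexp (I * π * x) * cexp (I * π * y))⁻¹ - cexp (I * π * x) * cexp (I * π * y)) /
        ((cexp (I * π * y))⁻¹ - cexp (I * π * y)) := by
  rw [ofReal_div, ofReal_sin_mul_pi, ofReal_sin_mul_pi, exp_I_pi_mul_add,
    mul_div_mul_right _ _ (div_ne_zero I_ne_zero two_ne_zero)]

/-- The Stokes parameters of the algebraic function `∏(z - a_k)^{α_k}`: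
with `v₁ = 1 - e^{2πiα₁}`, `v₂ = e^{2πiα₁}(1 - e^{2πiα₂})`, `v₃ = e^{-2πiα₃} - 1`,
the formulas (3.1) evaluate to `sin((α₀ + αᵢ)π)/sin(αᵢπ)`. -/
theorem algebraic_weight_stokes (α₀ α₁ α₂ α₃ : ℝ)
    (hsum : ∃ m : ℤ, α₀ + α₁ + α₂ + α₃ = (m : ℝ))
    (h₁ : ∀ m : ℤ, α₁ ≠ (m : ℝ)) (h₂ : ∀ m : ℤ, α₂ ≠ (m : ℝ))
    (h₃ : ∀ m : ℤ, α₃ ≠ (m : ℝ))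
    (v₁ v₂ v₃ : ℂ)
    (hv₁ : v₁ = 1 - Complex.exp (2 * Real.pi * Complex.I * (α₁ : ℂ)))
    (hv₂ : v₂ = Complex.exp (2 * Real.pi * Complex.I * (α₁ : ℂ)) *
      (1 - Complex.exp (2 * Real.pi * Complex.I * (α₂ : ℂ))))
    (hv₃ : v₃ = Complex.exp (-(2 * Real.pi * Complex.I * (α₃ : ℂ))) - 1) :
    v₁ ≠ 0 ∧ v₂ ≠ 0 ∧ v₃ ≠ 0 ∧
      -(Complex.exp (Complex.I * Real.pi * (α₀ : ℂ)) * v₂ +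
          Complex.exp (-(Complex.I * Real.pi * (α₀ : ℂ))) * v₃) / v₁ =
        ((Real.sin ((α₀ + α₁) * Real.pi) / Real.sin (α₁ * Real.pi) : ℝ) : ℂ) ∧
      -(v₁ + v₃) / (Complex.exp (Complex.I * Real.pi * (α₀ : ℂ)) * v₂) =
        ((Real.sin ((α₀ + α₂) * Real.pi) / Real.sin (α₂ * Real.pi) : ℝ) : ℂ) ∧
      -(v₂ + v₁) / (Complex.exp (-(Complex.I * Real.pi * (α₀ : ℂ))) * v₃) =
        ((Real.sin ((α₀ + α₃) * Real.pi) / Real.sin (α₃ * Real.pi) : ℝ) : ℂ) := by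
  obtain ⟨m, hm⟩ := hsum
  have hprod : (cexp (I * π * α₀) * cexp (I * π * α₁) * cexp (I * π * α₂) *
      cexp (I * π * α₃)) ^ 2 = 1 := by
    rw [← exp_I_pi_mul_add, ← exp_I_pi_mul_add, ← exp_I_pi_mul_add, hm, exp_I_pi_mul_int_sq]
  have hq₁ := exp_I_pi_mul_sq_ne_one h₁
  have hq₂ := exp_I_pi_mul_sq_ne_one h₂
  have hq₃ := exp_I_pi_mul_sq_ne_one h₃
  simp only [← exp_I_pi_mul_sq, exp_neg] at hv₁ hv₂ hv₃ ⊢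
  subst hv₁ hv₂ hv₃
  simp only [ofReal_sin_add_mul_pi_div_sin_mul_pi]
  refine ⟨sub_ne_zero.mpr hq₁.symm, mul_ne_zero (pow_ne_zero _ (exp_ne_zero _))
    (sub_ne_zero.mpr hq₂.symm), sub_ne_zero.mpr (inv_ne_one.mpr hq₃),
    stokes_param_one hprod hq₁, stokes_param_two hprod hq₂, stokes_param_three hprod hq₃⟩
end
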